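/- Let θ ∈ [0,2π), let α⃗=(α₀,α₁,α₂,α₃) ∈ ℂ⁴ with 0 < Re α_ℓ < 1 for ℓ=0,1,2,3, and let f = f₁ + f₂·j ∈ AC¹(J_a^b,ℍ) with f₁,f₂ complex-valued. Then for all ξ=(ζ₁,ζ₂), q=(z₁,z₂) ∈ J_a^b one has the decomposition ^θ𝔇_a^{α⃗}[f](ξ,q) = (𝔇_{a₁}^{(α₀,α₁)}[f₁](ξ,q) − i e^{iθ}·conj(𝔇_{a₂}^{(α₂,α₃)}[f₂](ξ,q))) + (𝔇_{a₁}^{(α₀,α₁)}[f₂](ξ,q) + i e^{iθ}·conj(𝔇_{a₂}^{(α₂,α₃)}[f₁](ξ,q)))·j, where conj denotes conjugation with respect to the imaginary unit i. Consequently, for fixed ξ, ^θ𝔇_a^{α⃗}[f](ξ,q) = 0 for all q ∈ J_a^b if and only if for all q ∈ J_a^b: 𝔇_{a₁}^{(α₀,α₁)}[f₁](ξ,q) = i e^{iθ}·conj(𝔇_{a₂}^{(α₂,α₃)}[f₂](ξ,q)) and 𝔇_{a₂}^{(α₂,α₃)}[f₁](ξ,q) = − i e^{iθ}·conj(𝔇_{a₁}^{(α₀,α₁)}[f₂](ξ,q))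 (the fractional Cauchy–Riemann system of order α⃗). -/

import Mathlib

noncomputable section

open MeasureTheory Set

/-- Biquaternions: quaternions over the complex field `ℂ(𝗂)`; real quaternions and
`ℂ(i)(ℂ(𝗂))` (bicomplex) values embed into `BQ`. -/
abbrev BQ : Type := Quaternion ℂ

/-- The complex number `x + i y`. -/
def cplx (x y : ℝ) : ℂ := ⟨x, y⟩

/-- The quaternionic imaginary unit `i`. -/
def qi : BQ := ⟨0, 1, 0, 0⟩

/-- The quaternionic imaginary unit `j`. -/
def qj : BQ := ⟨0, 0, 1, 0⟩

/-- `e^{iθ} = cos θ + i sin θ`, with `i` the quaternionic imaginary unit. -/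
def eθ (θ : ℝ) : BQ := ⟨(Real.cos θ : ℂ), (Real.sin θ : ℂ), 0, 0⟩

/-- Embedding of `ℂ(i)` into the biquaternions. -/
def cC (w : ℂ) : BQ := ⟨(w.re : ℂ), (w.im : ℂ), 0, 0⟩

/-- Embedding of the scalars `ℂ(𝗂)` into the biquaternions. -/
def sC (w : ℂ) : BQ := ⟨w, 0, 0, 0⟩

/-- The element `u + i v` with `u, v ∈ ℂ(𝗂)` and `i` the quaternionic unit. -/
def mk2 (u v : ℂ) : BQ := ⟨u, v, 0, 0⟩

/-- Conjugation with respect to the quaternionic imaginary unit `i`. -/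
def iconj (w : BQ) : BQ := ⟨w.re, -w.imI, w.imJ, w.imK⟩

/-- The ℍ-valued function `f = f₁ + f₂ j` built from its two `ℂ(i)`-valued components. -/
def hF (f₁ f₂ : ℂ × ℂ → ℂ) (p : ℂ × ℂ) : BQ := cC (f₁ p) + cC (f₂ p) * qj

/-- Left Riemann–Liouville fractional integral of order `α` with base point `a`. -/
def RLI (α : ℂ) (a : ℝ) (f : ℝ → ℂ) (x : ℝ) : ℂ :=
  (Complex.Gamma α)⁻¹ * ∫ τ in a..x, f τ * ((x : ℂ) - (τ : ℂ)) ^ (α - 1)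

/-- Left Riemann–Liouville fractional derivative of order `α` (for `0 < Re α < 1`). -/
def RLD (α : ℂ) (a : ℝ) (f : ℝ → ℂ) (x : ℝ) : ℂ :=
  deriv (fun y => RLI (1 - α) a f y) x

/-- Componentwise Riemann–Liouville integral of a biquaternion-valued function. -/
def qRLI (α : ℂ) (a : ℝ) (F : ℝ → BQ) (x : ℝ) : BQ :=
  ⟨RLI α a (fun t => (F t).re) x, RLI α a (fun t => (F t).imI) x,
   RLI α a (fun t => (F t).imJ) x, RLI α a (fun t => (F t).imK) x⟩

/-- Componentwise Riemann–Liouville derivative of a biquaternion-valued function. -/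
def qRLD (α : ℂ) (a : ℝ) (F : ℝ → BQ) (x : ℝ) : BQ :=
  ⟨RLD α a (fun t => (F t).re) x, RLD α a (fun t => (F t).imI) x,
   RLD α a (fun t => (F t).imJ) x, RLD α a (fun t => (F t).imK) x⟩

/-- Componentwise derivative of a biquaternion-valued function of a real variable. -/
def qderiv (F : ℝ → BQ) (x : ℝ) : BQ :=
  ⟨deriv (fun t => (F t).re) x, deriv (fun t => (F t).imI) x,
   deriv (fun t => (F t).imJ) x, deriv (fun t => (F t).imK) x⟩

/-- Partial derivative in the real coordinate `x₀ = Re z₁`. -/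
def pd0 (G : ℂ × ℂ → BQ) (q : ℂ × ℂ) : BQ := qderiv (fun t => G (cplx t q.1.im, q.2)) q.1.re
/-- Partial derivative in the real coordinate `x₁ = Im z₁`. -/
def pd1 (G : ℂ × ℂ → BQ) (q : ℂ × ℂ) : BQ := qderiv (fun t => G (cplx q.1.re t, q.2)) q.1.im
/-- Partial derivative in the real coordinate `x₂ = Re z₂`. -/
def pd2 (G : ℂ × ℂ → BQ) (q : ℂ × ℂ) : BQ := qderiv (fun t => G (q.1, cplx t q.2.im)) q.2.re
/-- Partial derivative in the real coordinate `x₃ = Im z₂`. -/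
def pd3 (G : ℂ × ℂ → BQ) (q : ℂ × ℂ) : BQ := qderiv (fun t => G (q.1, cplx q.2.re t)) q.2.im

/-- The θ-Fueter operator `^θ𝒟 = ∂₀ + i ∂₁ + i e^{iθ} j ∂₂ + e^{iθ} j ∂₃`. -/
def FueterD (θ : ℝ) (G : ℂ × ℂ → BQ) (q : ℂ × ℂ) : BQ :=
  pd0 G q + qi * pd1 G q + (qi * eθ θ * qj) * pd2 G q + (eθ θ * qj) * pd3 G q

/-- The conjugate θ-Fueter operator `∂₀ − i ∂₁ − i e^{iθ} j ∂₂ − e^{iθ} j ∂₃`. -/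
def FueterDconj (θ : ℝ) (G : ℂ × ℂ → BQ) (q : ℂ × ℂ) : BQ :=
  pd0 G q - qi * pd1 G q - (qi * eθ θ * qj) * pd2 G q - (eθ θ * qj) * pd3 G q

/-- The Laplacian `Δ_{z₁}` in the real components of `z₁`. -/
def lap1 (G : ℂ × ℂ → BQ) (q : ℂ × ℂ) : BQ :=
  pd0 (fun p => pd0 G p) q + pd1 (fun p => pd1 G p) q
/-- The Laplacian `Δ_{z₂}` in the real components of `z₂`. -/
def lap2 (G : ℂ × ℂ → BQ) (q : ℂ × ℂ) : BQ :=
  pd2 (fun p => pd2 G p) q + pd3 (fun p => pd3 G p) q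

/-- `∂/∂z̄₁ = ½(∂₀ + i ∂₁)`. -/
def wbar1 (G : ℂ × ℂ → BQ) (q : ℂ × ℂ) : BQ := ((2 : ℂ))⁻¹ • (pd0 G q + qi * pd1 G q)
/-- `∂/∂z̄₂ = ½(∂₂ + i ∂₃)`. -/
def wbar2 (G : ℂ × ℂ → BQ) (q : ℂ × ℂ) : BQ := ((2 : ℂ))⁻¹ • (pd2 G q + qi * pd3 G q)
/-- `∂/∂z₁ = ½(∂₀ − i ∂₁)`. -/
def wz1 (G : ℂ × ℂ → BQ) (q : ℂ × ℂ) : BQ := ((2 : ℂ))⁻¹ • (pd0 G q - qi * pd1 G q)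
/-- `∂/∂z₂ = ½(∂₂ − i ∂₃)`. -/
def wz2 (G : ℂ × ℂ → BQ) (q : ℂ × ℂ) : BQ := ((2 : ℂ))⁻¹ • (pd2 G q - qi * pd3 G q)

/-- The open rectangle `J_a^b ⊆ ℂ²`. -/
def Jset (a b : ℂ × ℂ) : Set (ℂ × ℂ) :=
  {q | q.1.re ∈ Ioo a.1.re b.1.re ∧ q.1.im ∈ Ioo a.1.im b.1.im ∧
       q.2.re ∈ Ioo a.2.re b.2.re ∧ q.2.im ∈ Ioo a.2.im b.2.im}

/-- The closed rectangle (the closure of `J_a^b`). -/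
def Jc (a b : ℂ × ℂ) : Set (ℂ × ℂ) :=
  {q | q.1.re ∈ Icc a.1.re b.1.re ∧ q.1.im ∈ Icc a.1.im b.1.im ∧
       q.2.re ∈ Icc a.2.re b.2.re ∧ q.2.im ∈ Icc a.2.im b.2.im}

/-- Side condition for the rectangle data. -/
def JsetOK (a b : ℂ × ℂ) : Prop :=
  a.1.re < b.1.re ∧ a.1.im < b.1.im ∧ a.2.re < b.2.re ∧ a.2.im < b.2.im

/-- `m(J_a^q)`: the product of the four side lengths of `J_a^q`. -/
def mJ (a q : ℂ × ℂ) : ℝ :=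
  (q.1.re - a.1.re) * (q.1.im - a.1.im) * (q.2.re - a.2.re) * (q.2.im - a.2.im)

/-- Componentwise Bochner integral of a biquaternion-valued function over a set in `ℂ²`. -/
def qIntOn (s : Set (ℂ × ℂ)) (F : ℂ × ℂ → BQ) : BQ :=
  ⟨∫ p in s, (F p).re, ∫ p in s, (F p).imI, ∫ p in s, (F p).imJ, ∫ p in s, (F p).imK⟩

/-- The integral operator `𝓘_a^q[f](ξ,q,α⃗)`. -/
def Iop (α : Fin 4 → ℂ) (a : ℂ × ℂ) (f : ℂ × ℂ → BQ) (ξ q : ℂ × ℂ) : BQ :=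
  qIntOn (Jset a q) (fun τ =>
    ((mJ a q : ℂ))⁻¹ •
      (((((q.1.re - τ.1.re : ℝ) : ℂ) ^ (α 0)) / Complex.Gamma (α 0)) • f (cplx τ.1.re ξ.1.im, ξ.2)
      + ((((q.1.im - τ.1.im : ℝ) : ℂ) ^ (α 1)) / Complex.Gamma (α 1)) • f (cplx ξ.1.re τ.1.im, ξ.2)
      + ((((q.2.re - τ.2.re : ℝ) : ℂ) ^ (α 2)) / Complex.Gamma (α 2)) • f (ξ.1, cplx τ.2.re ξ.2.im)
      + ((((q.2.im - τ.2.im : ℝ) : ℂ) ^ (α 3)) / Complex.Gamma (α 3)) • f (ξ.1, cplx ξ.2.re τ.2.im)))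

/-- The fractional θ-Fueter operator `^θ𝔇_a^{α⃗}[g](ξ,q)`. -/
def fracD (θ : ℝ) (α : Fin 4 → ℂ) (a : ℂ × ℂ) (g : ℂ × ℂ → BQ) (ξ q : ℂ × ℂ) : BQ :=
  qRLD (α 0) a.1.re (fun t => g (cplx t ξ.1.im, ξ.2)) q.1.re
  + qi * qRLD (α 1) a.1.im (fun t => g (cplx ξ.1.re t, ξ.2)) q.1.im
  + (qi * eθ θ * qj) * qRLD (α 2) a.2.re (fun t => g (ξ.1, cplx t ξ.2.im)) q.2.re
  + (eθ θ * qj) * qRLD (α 3) a.2.im (fun t => g (ξ.1, cplx ξ.2.re t)) q.2.im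

/-- The right fractional θ-Fueter operator `^θ𝔇_{r,a}^{β⃗}[g](ξ,q)`. -/
def fracDr (θ : ℝ) (β : Fin 4 → ℂ) (a : ℂ × ℂ) (g : ℂ × ℂ → BQ) (ξ q : ℂ × ℂ) : BQ :=
  qRLD (β 0) a.1.re (fun t => g (cplx t ξ.1.im, ξ.2)) q.1.re
  + qRLD (β 1) a.1.im (fun t => g (cplx ξ.1.re t, ξ.2)) q.1.im * qi
  + qRLD (β 2) a.2.re (fun t => g (ξ.1, cplx t ξ.2.im)) q.2.re * (qi * eθ θ * qj)
  + qRLD (β 3) a.2.im (fun t => g (ξ.1, cplx ξ.2.re t)) q.2.im * (eθ θ * qj)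

/-- `𝔇_{a₁}^{(α₀,α₁)}` acting on a biquaternion-valued function. -/
def fracD1q (α0 α1 : ℂ) (a : ℂ × ℂ) (g : ℂ × ℂ → BQ) (ξ q : ℂ × ℂ) : BQ :=
  qRLD α0 a.1.re (fun t => g (cplx t ξ.1.im, ξ.2)) q.1.re
  + qi * qRLD α1 a.1.im (fun t => g (cplx ξ.1.re t, ξ.2)) q.1.im

/-- `𝔇_{a₂}^{(α₂,α₃)}` acting on a biquaternion-valued function. -/
def fracD2q (α2 α3 : ℂ) (a : ℂ × ℂ) (g : ℂ × ℂ → BQ) (ξ q : ℂ × ℂ) : BQ :=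
  qRLD α2 a.2.re (fun t => g (ξ.1, cplx t ξ.2.im)) q.2.re
  + qi * qRLD α3 a.2.im (fun t => g (ξ.1, cplx ξ.2.re t)) q.2.im

/-- `𝔇_{a₁}^{(α₀,α₁)}` acting on a `ℂ(i)`-valued function. -/
def fracD1 (α0 α1 : ℂ) (a : ℂ × ℂ) (g : ℂ × ℂ → ℂ) (ξ q : ℂ × ℂ) : BQ :=
  fracD1q α0 α1 a (fun p => cC (g p)) ξ q

/-- `𝔇_{a₂}^{(α₂,α₃)}` acting on a `ℂ(i)`-valued function. -/
def fracD2 (α2 α3 : ℂ) (a : ℂ × ℂ) (g : ℂ × ℂ → ℂ) (ξ q : ℂ × ℂ) : BQ :=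
  fracD2q α2 α3 a (fun p => cC (g p)) ξ q

/-- `𝔇_{r,a₁}^{(β₀,β₁)}` acting on a biquaternion-valued function. -/
def fracDr1q (β0 β1 : ℂ) (a : ℂ × ℂ) (g : ℂ × ℂ → BQ) (ξ q : ℂ × ℂ) : BQ :=
  qRLD β0 a.1.re (fun t => g (cplx t ξ.1.im, ξ.2)) q.1.re
  + qRLD β1 a.1.im (fun t => g (cplx ξ.1.re t, ξ.2)) q.1.im * qi

/-- `𝔇_{r,a₂}^{(β₂,β₃)}` acting on a biquaternion-valued function. -/
def fracDr2q (β2 β3 : ℂ) (a : ℂ × ℂ) (g : ℂ × ℂ → BQ) (ξ q : ℂ × ℂ) : BQ :=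
  qRLD β2 a.2.re (fun t => g (ξ.1, cplx t ξ.2.im)) q.2.re
  - qRLD β3 a.2.im (fun t => g (ξ.1, cplx ξ.2.re t)) q.2.im * qi

/-- `𝔇_{r,a₁}^{(β₀,β₁)}` acting on a `ℂ(i)`-valued function. -/
def fracDr1 (β0 β1 : ℂ) (a : ℂ × ℂ) (g : ℂ × ℂ → ℂ) (ξ q : ℂ × ℂ) : BQ :=
  fracDr1q β0 β1 a (fun p => cC (g p)) ξ q

/-- `𝔇_{r,a₂}^{(β₂,β₃)}` acting on a `ℂ(i)`-valued function. -/
def fracDr2 (β2 β3 : ℂ) (a : ℂ × ℂ) (g : ℂ × ℂ → ℂ) (ξ q : ℂ × ℂ) : BQ :=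
  fracDr2q β2 β3 a (fun p => cC (g p)) ξ q

/-- The fractional integral `ℑ_{a₁}^{(α₀,α₁)}[g](ξ,q)`. -/
def Iint1 (α0 α1 : ℂ) (a : ℂ × ℂ) (g : ℂ × ℂ → ℂ) (ξ q : ℂ × ℂ) : ℂ :=
  RLI α0 a.1.re (fun t => ((g (cplx t ξ.1.im, ξ.2)).re : ℂ)) q.1.re
  + RLI α1 a.1.im (fun t => ((g (cplx ξ.1.re t, ξ.2)).im : ℂ)) q.1.im

/-- The fractional integral `ℑ_{a₂}^{(α₂,α₃)}[g](ξ,q)` (θ-twisted). -/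
def Iint2 (θ : ℝ) (α2 α3 : ℂ) (a : ℂ × ℂ) (g : ℂ × ℂ → ℂ) (ξ q : ℂ × ℂ) : ℂ :=
  RLI α2 a.2.re
    (fun t => ((-Real.sin θ * (g (ξ.1, cplx t ξ.2.im)).re
                + Real.cos θ * (g (ξ.1, cplx t ξ.2.im)).im : ℝ) : ℂ)) q.2.re
  + RLI α3 a.2.im
    (fun t => ((Real.sin θ * (g (ξ.1, cplx ξ.2.re t)).im
                + Real.cos θ * (g (ξ.1, cplx ξ.2.re t)).re : ℝ) : ℂ)) q.2.im

/-- `ℑ_a^{α⃗}[f](ξ,q) = ℑ_{a₁}^{(α₀,α₁)}[f₁](ξ,q) + ℑ_{a₂}^{(α₂,α₃)}[f₂](ξ,q) j`. -/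
def IintQ (θ : ℝ) (α : Fin 4 → ℂ) (a : ℂ × ℂ) (f₁ f₂ : ℂ × ℂ → ℂ) (ξ q : ℂ × ℂ) : BQ :=
  sC (Iint1 (α 0) (α 1) a f₁ ξ q) + sC (Iint2 θ (α 2) (α 3) a f₂ ξ q) * qj

/-- Absolute continuity on a set of reals (integral-representation characterization). -/
def ACOn (f : ℝ → ℂ) (s : Set ℝ) : Prop :=
  ∃ x₀ ∈ s, ∃ g : ℝ → ℂ,
    (∀ x ∈ s, IntervalIntegrable g volume x₀ x) ∧
    ∀ x ∈ s, f x = f x₀ + ∫ t in x₀..x, g t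

/-- `AC¹`: absolute continuity in each of the four underlying real variables. -/
def AC1On (S : Set (ℂ × ℂ)) (F : ℂ × ℂ → ℂ) : Prop :=
  (∀ q ∈ S, ACOn (fun t => F (cplx t q.1.im, q.2)) {t | (cplx t q.1.im, q.2) ∈ S}) ∧
  (∀ q ∈ S, ACOn (fun t => F (cplx q.1.re t, q.2)) {t | (cplx q.1.re t, q.2) ∈ S}) ∧
  (∀ q ∈ S, ACOn (fun t => F (q.1, cplx t q.2.im)) {t | (q.1, cplx t q.2.im) ∈ S}) ∧
  (∀ q ∈ S, ACOn (fun t => F (q.1, cplx q.2.re t)) {t | (q.1, cplx q.2.re t) ∈ S})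

/-- Componentwise `C^n` smoothness of a biquaternion-valued map on a set. -/
def QContDiffOn (n : ℕ) (F : ℂ × ℂ → BQ) (s : Set (ℂ × ℂ)) : Prop :=
  ContDiffOn ℝ n (fun p => (F p).re) s ∧ ContDiffOn ℝ n (fun p => (F p).imI) s ∧
  ContDiffOn ℝ n (fun p => (F p).imJ) s ∧ ContDiffOn ℝ n (fun p => (F p).imK) s

/-- Componentwise integral of a biquaternion-valued function on a set in `ℝ³`. -/
def qInt3 (s : Set (ℝ × ℝ × ℝ)) (F : ℝ × ℝ × ℝ → BQ) : BQ :=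
  ⟨∫ x in s, (F x).re, ∫ x in s, (F x).imI, ∫ x in s, (F x).imJ, ∫ x in s, (F x).imK⟩

/-- Oriented pair of faces `x₀ = Re b₁` minus `x₀ = Re a₁`:  `∫_J ∂₀ H dμ`. -/
def qFace0 (a b : ℂ × ℂ) (H : ℂ × ℂ → BQ) : BQ :=
  qInt3 (Ioo a.1.im b.1.im ×ˢ Ioo a.2.re b.2.re ×ˢ Ioo a.2.im b.2.im)
      (fun x => H (cplx b.1.re x.1, cplx x.2.1 x.2.2))
  - qInt3 (Ioo a.1.im b.1.im ×ˢ Ioo a.2.re b.2.re ×ˢ Ioo a.2.im b.2.im)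
      (fun x => H (cplx a.1.re x.1, cplx x.2.1 x.2.2))

/-- Oriented pair of faces `x₁ = Im b₁` minus `x₁ = Im a₁`. -/
def qFace1 (a b : ℂ × ℂ) (H : ℂ × ℂ → BQ) : BQ :=
  qInt3 (Ioo a.1.re b.1.re ×ˢ Ioo a.2.re b.2.re ×ˢ Ioo a.2.im b.2.im)
      (fun x => H (cplx x.1 b.1.im, cplx x.2.1 x.2.2))
  - qInt3 (Ioo a.1.re b.1.re ×ˢ Ioo a.2.re b.2.re ×ˢ Ioo a.2.im b.2.im)
      (fun x => H (cplx x.1 a.1.im, cplx x.2.1 x.2.2))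

/-- Oriented pair of faces `x₂ = Re b₂` minus `x₂ = Re a₂`. -/
def qFace2 (a b : ℂ × ℂ) (H : ℂ × ℂ → BQ) : BQ :=
  qInt3 (Ioo a.1.re b.1.re ×ˢ Ioo a.1.im b.1.im ×ˢ Ioo a.2.im b.2.im)
      (fun x => H (cplx x.1 x.2.1, cplx b.2.re x.2.2))
  - qInt3 (Ioo a.1.re b.1.re ×ˢ Ioo a.1.im b.1.im ×ˢ Ioo a.2.im b.2.im)
      (fun x => H (cplx x.1 x.2.1, cplx a.2.re x.2.2))

/-- Oriented pair of faces `x₃ = Im b₂` minus `x₃ = Im a₂`. -/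
def qFace3 (a b : ℂ × ℂ) (H : ℂ × ℂ → BQ) : BQ :=
  qInt3 (Ioo a.1.re b.1.re ×ˢ Ioo a.1.im b.1.im ×ˢ Ioo a.2.re b.2.re)
      (fun x => H (cplx x.1 x.2.1, cplx x.2.2 b.2.im))
  - qInt3 (Ioo a.1.re b.1.re ×ˢ Ioo a.1.im b.1.im ×ˢ Ioo a.2.re b.2.re)
      (fun x => H (cplx x.1 x.2.1, cplx x.2.2 a.2.im))

/-- `∫_{∂J_a^b} G σ^θ_q F`: sum over the eight oriented faces of the rectangle, where
`σ^θ = Σ_m (-1)^m ψ_m dx_{[m]}` for the structural set `ψ = {1, i, i e^{iθ} j, e^{iθ} j}`. -/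
def bInt (θ : ℝ) (a b : ℂ × ℂ) (G F : ℂ × ℂ → BQ) : BQ :=
  qFace0 a b (fun p => G p * F p) + qFace1 a b (fun p => G p * qi * F p)
  + qFace2 a b (fun p => G p * (qi * eθ θ * qj) * F p)
  + qFace3 a b (fun p => G p * (eθ θ * qj) * F p)

/-- `∫_{∂J_a^b} H (dq̄_{[2]} ∧ dq)`, where `dq̄_{[2]} ∧ dq = 2 dx_{[0]} − 2 i dx_{[1]}`. -/
def bI1 (a b : ℂ × ℂ) (H : ℂ × ℂ → BQ) : BQ :=
  (2 : ℂ) • qFace0 a b H + (2 : ℂ) • (qi * qFace1 a b H)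

/-- `∫_{∂J_a^b} H (dq_{[1]} ∧ dq̄)`, where `dq_{[1]} ∧ dq̄ = −2 dx_{[2]} − 2 i dx_{[3]}`. -/
def bI2 (a b : ℂ × ℂ) (H : ℂ × ℂ → BQ) : BQ :=
  (-2 : ℂ) • qFace2 a b H + (2 : ℂ) • (qi * qFace3 a b H)

/-- `∫_{∂J_a^b} H conj(dq_{[1]} ∧ dq̄)`. -/
def bI2c (a b : ℂ × ℂ) (H : ℂ × ℂ → BQ) : BQ :=
  (-2 : ℂ) • qFace2 a b H - (2 : ℂ) • (qi * qFace3 a b H)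

/-- `|ξ − q|⁴`. -/
def kerden (ξ q : ℂ × ℂ) : ℝ :=
  (Complex.normSq (ξ.1 - q.1) + Complex.normSq (ξ.2 - q.2)) ^ 2

/-- `(ζ̄₁ − z̄₁)/|ξ − q|⁴`. -/
def ker1fn (ξ q : ℂ × ℂ) : ℂ :=
  (starRingEnd ℂ ξ.1 - starRingEnd ℂ q.1) / ((kerden ξ q : ℝ) : ℂ)

/-- `(ζ̄₂ − z̄₂)/|ξ − q|⁴`. -/
def ker2fn (ξ q : ℂ × ℂ) : ℂ :=
  (starRingEnd ℂ ξ.2 - starRingEnd ℂ q.2) / ((kerden ξ q : ℝ) : ℂ)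

/-- The fractional kernel `K_a^{α₀,α₁}(ξ,q)`. -/
def K1 (α0 α1 : ℂ) (a : ℂ × ℂ) (ξ q : ℂ × ℂ) : BQ :=
  ((2 * Real.pi ^ 2 : ℝ) : ℂ)⁻¹ •
    (qRLD α0 a.1.re (fun t => cC (ker1fn ξ (cplx t q.1.im, q.2))) q.1.re
     + qRLD α1 a.1.im (fun t => cC (ker1fn ξ (cplx q.1.re t, q.2))) q.1.im)

/-- The fractional kernel `K_a^{α₂,α₃}(ξ,q)` (with the factor `−(1/2π²) i e^{−iθ}`). -/
def K2 (θ : ℝ) (α2 α3 : ℂ) (a : ℂ × ℂ) (ξ q : ℂ × ℂ) : BQ :=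
  -(((2 * Real.pi ^ 2 : ℝ) : ℂ)⁻¹ •
    ((qi * eθ (-θ)) *
      (qRLD α2 a.2.re (fun t => cC (ker2fn ξ (q.1, cplx t q.2.im))) q.2.re
       + qRLD α3 a.2.im (fun t => cC (ker2fn ξ (q.1, cplx q.2.re t))) q.2.im)))

/-- The fractional Cauchy kernel `𝔎_{θ,a}^{α⃗}(ξ,q)`. -/
def frakK (θ : ℝ) (α : Fin 4 → ℂ) (a : ℂ × ℂ) (ξ q : ℂ × ℂ) : BQ :=
  K1 (α 0) (α 1) a ξ q + K2 θ (α 2) (α 3) a ξ q * qj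

/-- Coefficient `1/(Γ(γ) s^γ)` appearing in the residual term. -/
def Ncoef (γ : ℂ) (s : ℝ) : ℂ := (Complex.Gamma γ * ((s : ℝ) : ℂ) ^ γ)⁻¹

/-- The residual term `N[f](ξ,q,α⃗)`. -/
def Nterm (α : Fin 4 → ℂ) (a : ℂ × ℂ) (f : ℂ × ℂ → BQ) (ξ q : ℂ × ℂ) : BQ :=
  (Ncoef (α 1) (q.1.im - a.1.im) + Ncoef (α 2) (q.2.re - a.2.re) + Ncoef (α 3) (q.2.im - a.2.im)) •
    qRLI (α 0) a.1.re (fun t => f (cplx t ξ.1.im, ξ.2)) q.1.re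
  + (Ncoef (α 0) (q.1.re - a.1.re) + Ncoef (α 2) (q.2.re - a.2.re) + Ncoef (α 3) (q.2.im - a.2.im)) •
    qRLI (α 1) a.1.im (fun t => f (cplx ξ.1.re t, ξ.2)) q.1.im
  + (Ncoef (α 0) (q.1.re - a.1.re) + Ncoef (α 1) (q.1.im - a.1.im) + Ncoef (α 3) (q.2.im - a.2.im)) •
    qRLI (α 2) a.2.re (fun t => f (ξ.1, cplx t ξ.2.im)) q.2.re
  + (Ncoef (α 0) (q.1.re - a.1.re) + Ncoef (α 1) (q.1.im - a.1.im) + Ncoef (α 2) (q.2.re - a.2.re)) •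
    qRLI (α 3) a.2.im (fun t => f (ξ.1, cplx ξ.2.re t)) q.2.im

lemma RLD_zero (β : ℂ) (c x : ℝ) : RLD β c (fun _ => (0:ℂ)) x = 0 := by
  have h : (fun y => RLI (1 - β) c (fun _ => (0:ℂ)) y) = fun _ => (0:ℂ) := by
    funext y; simp [RLI]
  simp [RLD, h]

lemma hF_re (f₁ f₂ : ℂ × ℂ → ℂ) (p : ℂ × ℂ) : (hF f₁ f₂ p).re = ((f₁ p).re : ℂ) := by
  rw [hF, Quaternion.re_add, Quaternion.re_mul]
  simp [cC, qj]

lemma hF_imI (f₁ f₂ : ℂ × ℂ → ℂ) (p : ℂ × ℂ) : (hF f₁ f₂ p).imI = ((f₁ p).im : ℂ) := by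
  rw [hF, Quaternion.imI_add, Quaternion.imI_mul]
  simp [cC, qj]

lemma hF_imJ (f₁ f₂ : ℂ × ℂ → ℂ) (p : ℂ × ℂ) : (hF f₁ f₂ p).imJ = ((f₂ p).re : ℂ) := by
  rw [hF, Quaternion.imJ_add, Quaternion.imJ_mul]
  simp [cC, qj]

lemma hF_imK (f₁ f₂ : ℂ × ℂ → ℂ) (p : ℂ × ℂ) : (hF f₁ f₂ p).imK = ((f₂ p).im : ℂ) := by
  rw [hF, Quaternion.imK_add, Quaternion.imK_mul]
  simp [cC, qj]

lemma cC_re (w : ℂ) : (cC w).re = (w.re : ℂ) := rfl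
lemma cC_imI (w : ℂ) : (cC w).imI = (w.im : ℂ) := rfl
lemma cC_imJ (w : ℂ) : (cC w).imJ = 0 := rfl
lemma cC_imK (w : ℂ) : (cC w).imK = 0 := rfl

def mk4 (x y z w : ℂ) : BQ := ⟨x, y, z, w⟩

lemma mk4_re (x y z w : ℂ) : (mk4 x y z w).re = x := rfl
lemma mk4_imI (x y z w : ℂ) : (mk4 x y z w).imI = y := rfl
lemma mk4_imJ (x y z w : ℂ) : (mk4 x y z w).imJ = z := rfl
lemma mk4_imK (x y z w : ℂ) : (mk4 x y z w).imK = w := rfl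

lemma qRLD_eq (β : ℂ) (c : ℝ) (F : ℝ → BQ) (x : ℝ) :
    qRLD β c F x = mk4 (RLD β c (fun t => (F t).re) x) (RLD β c (fun t => (F t).imI) x)
      (RLD β c (fun t => (F t).imJ) x) (RLD β c (fun t => (F t).imK) x) := rfl

lemma qi_eq : qi = mk4 0 1 0 0 := rfl
lemma qj_eq : qj = mk4 0 0 1 0 := rfl
lemma eθ_eq (θ : ℝ) : eθ θ = mk4 (Real.cos θ : ℂ) (Real.sin θ : ℂ) 0 0 := rfl
lemma iconj_re (w : BQ) : (iconj w).re = w.re := rfl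
lemma iconj_imI (w : BQ) : (iconj w).imI = -w.imI := rfl
lemma iconj_imJ (w : BQ) : (iconj w).imJ = w.imJ := rfl
lemma iconj_imK (w : BQ) : (iconj w).imK = w.imK := rfl

lemma decomp_alg (θ : ℝ) (x00 x01 x02 x03 x10 x11 x12 x13 x20 x21 x22 x23 x30 x31 x32 x33 : ℂ) :
    mk4 x00 x01 x02 x03 + qi * mk4 x10 x11 x12 x13
      + (qi * eθ θ * qj) * mk4 x20 x21 x22 x23 + (eθ θ * qj) * mk4 x30 x31 x32 x33
    = ((mk4 x00 x01 0 0 + qi * mk4 x10 x11 0 0)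
        - (qi * eθ θ) * iconj (mk4 x22 x23 0 0 + qi * mk4 x32 x33 0 0))
      + ((mk4 x02 x03 0 0 + qi * mk4 x12 x13 0 0)
        + (qi * eθ θ) * iconj (mk4 x20 x21 0 0 + qi * mk4 x30 x31 0 0)) * qj := by
  simp only [qi_eq, qj_eq, eθ_eq, iconj_re, iconj_imI, iconj_imJ, iconj_imK, Quaternion.ext_iff, Quaternion.re_mul,
    Quaternion.imI_mul, Quaternion.imJ_mul, Quaternion.imK_mul, Quaternion.re_add,
    Quaternion.imI_add, Quaternion.imJ_add, Quaternion.imK_add, Quaternion.re_sub,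
    Quaternion.imI_sub, Quaternion.imJ_sub, Quaternion.imK_sub, Quaternion.re_neg,
    Quaternion.imI_neg, Quaternion.imJ_neg, Quaternion.imK_neg, Quaternion.re_zero,
    Quaternion.imI_zero, Quaternion.imJ_zero, Quaternion.imK_zero, mk4_re, mk4_imI,
    mk4_imJ, mk4_imK]
  refine ⟨?_, ?_, ?_, ?_⟩ <;> ring

lemma cr_alg (θ : ℝ) (x00 x01 x02 x03 x10 x11 x12 x13 x20 x21 x22 x23 x30 x31 x32 x33 : ℂ) :
    (mk4 x00 x01 x02 x03 + qi * mk4 x10 x11 x12 x13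
      + (qi * eθ θ * qj) * mk4 x20 x21 x22 x23 + (eθ θ * qj) * mk4 x30 x31 x32 x33 = 0)
    ↔ ((mk4 x00 x01 0 0 + qi * mk4 x10 x11 0 0)
          = (qi * eθ θ) * iconj (mk4 x22 x23 0 0 + qi * mk4 x32 x33 0 0)
        ∧ (mk4 x20 x21 0 0 + qi * mk4 x30 x31 0 0)
          = -((qi * eθ θ) * iconj (mk4 x02 x03 0 0 + qi * mk4 x12 x13 0 0))) := by
  have hcs : (Real.cos θ : ℂ)^2 + (Real.sin θ : ℂ)^2 = 1 := by
    norm_cast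
    exact Real.cos_sq_add_sin_sq θ
  simp only [qi_eq, qj_eq, eθ_eq, iconj_re, iconj_imI, iconj_imJ, iconj_imK, Quaternion.ext_iff, Quaternion.re_mul,
    Quaternion.imI_mul, Quaternion.imJ_mul, Quaternion.imK_mul, Quaternion.re_add,
    Quaternion.imI_add, Quaternion.imJ_add, Quaternion.imK_add, Quaternion.re_sub,
    Quaternion.imI_sub, Quaternion.imJ_sub, Quaternion.imK_sub, Quaternion.re_neg,
    Quaternion.imI_neg, Quaternion.imJ_neg, Quaternion.imK_neg, Quaternion.re_zero,
    Quaternion.imI_zero, Quaternion.imJ_zero, Quaternion.imK_zero, mk4_re, mk4_imI,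
    mk4_imJ, mk4_imK]
  constructor
  · rintro ⟨h1, h2, h3, h4⟩
    refine ⟨⟨?_, ?_, ?_, ?_⟩, ?_, ?_, ?_, ?_⟩
    · linear_combination h1
    · linear_combination h2
    · ring
    · ring
    · linear_combination (-(Real.sin θ : ℂ)) * h3 + (Real.cos θ : ℂ) * h4 - (x20 - x31) * hcs
    · linear_combination (Real.cos θ : ℂ) * h3 + (Real.sin θ : ℂ) * h4 - (x21 + x30) * hcs
    · ring
    · ring
  · rintro ⟨⟨k1, k2, -, -⟩, k3, k4, -, -⟩
    refine ⟨?_, ?_, ?_, ?_⟩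
    · linear_combination k1
    · linear_combination k2
    · linear_combination (-(Real.sin θ : ℂ)) * k3 + (Real.cos θ : ℂ) * k4 - (x02 - x13) * hcs
    · linear_combination (Real.cos θ : ℂ) * k3 + (Real.sin θ : ℂ) * k4 - (x03 + x12) * hcs


set_option maxHeartbeats 2000000 in
/-- decomposition of the fractional θ-Fueter operator of `f = f₁ + f₂ j`
into its `ℂ(i)(ℂ(𝗂))`-components, and the equivalence of `^θ𝔇_a^{α⃗}[f](ξ,·) = 0`
with the fractional Cauchy–Riemann system of order `α⃗`. -/
theorem fracD_decomposition_and_fractional_CR_system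
    (θ : ℝ) (hθ : 0 ≤ θ ∧ θ < 2 * Real.pi)
    (α : Fin 4 → ℂ) (hα : ∀ ℓ, 0 < (α ℓ).re ∧ (α ℓ).re < 1)
    (a b : ℂ × ℂ) (hab : JsetOK a b)
    (f₁ f₂ : ℂ × ℂ → ℂ) (hf₁ : AC1On (Jset a b) f₁) (hf₂ : AC1On (Jset a b) f₂) :
    (∀ ξ ∈ Jset a b, ∀ q ∈ Jset a b,
      fracD θ α a (hF f₁ f₂) ξ q =
        (fracD1 (α 0) (α 1) a f₁ ξ q - (qi * eθ θ) * iconj (fracD2 (α 2) (α 3) a f₂ ξ q))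
        + (fracD1 (α 0) (α 1) a f₂ ξ q + (qi * eθ θ) * iconj (fracD2 (α 2) (α 3) a f₁ ξ q)) * qj)
    ∧
    (∀ ξ ∈ Jset a b,
      ((∀ q ∈ Jset a b, fracD θ α a (hF f₁ f₂) ξ q = 0) ↔
        (∀ q ∈ Jset a b,
          fracD1 (α 0) (α 1) a f₁ ξ q = (qi * eθ θ) * iconj (fracD2 (α 2) (α 3) a f₂ ξ q) ∧
          fracD2 (α 2) (α 3) a f₁ ξ q
            = -((qi * eθ θ) * iconj (fracD1 (α 0) (α 1) a f₂ ξ q))))) := by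
  
  have part1 : ∀ ξ ∈ Jset a b, ∀ q ∈ Jset a b,
      fracD θ α a (hF f₁ f₂) ξ q =
        (fracD1 (α 0) (α 1) a f₁ ξ q - (qi * eθ θ) * iconj (fracD2 (α 2) (α 3) a f₂ ξ q))
        + (fracD1 (α 0) (α 1) a f₂ ξ q + (qi * eθ θ) * iconj (fracD2 (α 2) (α 3) a f₁ ξ q)) * qj := by
    intro ξ _ q _
    simp only [fracD, fracD1, fracD2, fracD1q, fracD2q, qRLD_eq, hF_re, hF_imI, hF_imJ, hF_imK,
      cC_re, cC_imI, cC_imJ, cC_imK, RLD_zero]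
    exact decomp_alg θ _ _ _ _ _ _ _ _ _ _ _ _ _ _ _ _
  refine ⟨part1, ?_⟩
  intro ξ hξ
  refine forall₂_congr fun q hq => ?_
  simp only [fracD, fracD1, fracD2, fracD1q, fracD2q, qRLD_eq, hF_re, hF_imI, hF_imJ, hF_imK,
    cC_re, cC_imI, cC_imJ, cC_imK, RLD_zero]
  exact cr_alg θ _ _ _ _ _ _ _ _ _ _ _ _ _ _ _ _
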